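/- arXiv:1911.00551 — 3 statements merged into one kernel-verified Lean document; each statement's English description precedes it below -/
import Mathlib

section
/- Let $n_1, n_2, n_3, m_1, m_2, m_3$ be integers with $n_1 + n_2 + n_3 + m_1 + m_2 + m_3 = 0$, $n_3 + m_3 \ne 0$, $|n_3| \ge 576$, and $4 n_1^2 \le |n_3|$, $4 n_2^2 \le |n_3|$, $4 m_1^2 \le |n_3|$, $4 m_2^2 \le |n_3|$. Then $\left| \Phi(n_1,n_2,n_3) + \Phi(m_1,m_2,m_3) \right| \ge \tfrac{1}{2} n_3^2$, where $\Phi(k_1,k_2,k_3) = (k_1+k_2+k_3)^3 - k_1^3 - k_2^3 - k_3^3$. -/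
/-!
If the six frequencies sum to zero, the cubes of the two outer sums cancel and
`Φ(n) + Φ(m) = -(n₁³ + n₂³ + m₁³ + m₂³) - (n₃³ + m₃³)`. The factorisation
`n₃³ + m₃³ = (n₃ + m₃)(n₃² - n₃m₃ + m₃²)` with `n₃ + m₃` a nonzero integer gives
`|n₃³ + m₃³| ≥ ¾ n₃²`, while each small frequency `k` satisfies `|k|³ ≤ n₃² / 192`,
so the four small cubes cost at most `n₃² / 48`.
-/

/-- The resonance function `Φ(k₁,k₂,k₃) = (k₁+k₂+k₃)³ - k₁³ - k₂³ - k₃³`. -/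
def Phi (k₁ k₂ k₃ : ℤ) : ℤ := (k₁ + k₂ + k₃) ^ 3 - k₁ ^ 3 - k₂ ^ 3 - k₃ ^ 3

theorem Phi_add_Phi_of_sum_eq_zero {n₁ n₂ n₃ m₁ m₂ m₃ : ℤ}
    (hsum : n₁ + n₂ + n₃ + m₁ + m₂ + m₃ = 0) :
    Phi n₁ n₂ n₃ + Phi m₁ m₂ m₃ = -(n₁ ^ 3 + n₂ ^ 3 + m₁ ^ 3 + m₂ ^ 3) - (n₃ ^ 3 + m₃ ^ 3) := by
  have hm₃ : m₃ = -(n₁ + n₂ + n₃ + m₁ + m₂) := by linarith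
  subst hm₃
  simp only [Phi]
  ring

theorem three_mul_sq_le_four_mul_abs_pow_three_add {x y : ℤ} (hxy : x + y ≠ 0) :
    3 * x ^ 2 ≤ 4 * |x ^ 3 + y ^ 3| := by
  have hfactor : x ^ 3 + y ^ 3 = (x + y) * (x ^ 2 - x * y + y ^ 2) := by ring
  have hform : 3 * x ^ 2 ≤ 4 * (x ^ 2 - x * y + y ^ 2) := by nlinarith [sq_nonneg (2 * y - x)]
  have hform_nonneg : 0 ≤ x ^ 2 - x * y + y ^ 2 := by nlinarith [sq_nonneg x]
  rw [hfactor, abs_mul, abs_of_nonneg hform_nonneg]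
  nlinarith [Int.one_le_abs hxy]

section SmallFrequency

variable {R : Type*} [CommRing R] [LinearOrder R] [IsStrictOrderedRing R] {k N : R}

theorem mul_abs_le_of_four_mul_sq_le (hN : 576 ≤ N) (hk : 4 * k ^ 2 ≤ N) : 48 * |k| ≤ N := by
  have hN₀ : 0 ≤ N := le_trans (by norm_num) hN
  refine (pow_le_pow_iff_left₀ (by positivity) hN₀ two_ne_zero).mp ?_
  calc (48 * |k|) ^ 2 = 576 * (4 * k ^ 2) := by rw [mul_pow, sq_abs]; ring
    _ ≤ N * N := mul_le_mul hN hk (by positivity) hN₀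
    _ = N ^ 2 := (sq N).symm

theorem abs_pow_three_le_of_four_mul_sq_le (hN : 576 ≤ N) (hk : 4 * k ^ 2 ≤ N) :
    192 * |k| ^ 3 ≤ N ^ 2 :=
  calc 192 * |k| ^ 3 = 4 * k ^ 2 * (48 * |k|) := by rw [← sq_abs k]; ring
    _ ≤ N * N := mul_le_mul hk (mul_abs_le_of_four_mul_sq_le hN hk) (by positivity)
        (le_trans (by norm_num) hN)
    _ = N ^ 2 := (sq N).symm

end SmallFrequency

theorem stmt5 (n₁ n₂ n₃ m₁ m₂ m₃ : ℤ)
    (hsum : n₁ + n₂ + n₃ + m₁ + m₂ + m₃ = 0) (hnm : n₃ + m₃ ≠ 0)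
    (hbig : 576 ≤ |n₃|)
    (h1 : 4 * n₁ ^ 2 ≤ |n₃|) (h2 : 4 * n₂ ^ 2 ≤ |n₃|)
    (h3 : 4 * m₁ ^ 2 ≤ |n₃|) (h4 : 4 * m₂ ^ 2 ≤ |n₃|) :
    ((1 : ℝ) / 2) * (n₃ : ℝ) ^ 2 ≤ |((Phi n₁ n₂ n₃ + Phi m₁ m₂ m₃ : ℤ) : ℝ)| := by
  set S := Phi n₁ n₂ n₃ + Phi m₁ m₂ m₃
  have hS : S = -(n₁ ^ 3 + n₂ ^ 3 + m₁ ^ 3 + m₂ ^ 3) - (n₃ ^ 3 + m₃ ^ 3) :=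
    Phi_add_Phi_of_sum_eq_zero hsum
  have hlarge := three_mul_sq_le_four_mul_abs_pow_three_add hnm
  have hsmall : |n₁ ^ 3 + n₂ ^ 3 + m₁ ^ 3 + m₂ ^ 3| ≤
      |n₁| ^ 3 + |n₂| ^ 3 + |m₁| ^ 3 + |m₂| ^ 3 := by
    have h₄ := abs_add_le (n₁ ^ 3 + n₂ ^ 3 + m₁ ^ 3) (m₂ ^ 3)
    have h₃ := abs_add_three (n₁ ^ 3) (n₂ ^ 3) (m₁ ^ 3)
    simp only [abs_pow] at h₃ h₄
    linarith
  have hcubes (k : ℤ) (hk : 4 * k ^ 2 ≤ |n₃|) : 192 * |k| ^ 3 ≤ n₃ ^ 2 :=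
    sq_abs n₃ ▸ abs_pow_three_le_of_four_mul_sq_le hbig hk
  have hcancel : |n₃ ^ 3 + m₃ ^ 3| ≤ |S| + |n₁ ^ 3 + n₂ ^ 3 + m₁ ^ 3 + m₂ ^ 3| :=
    calc |n₃ ^ 3 + m₃ ^ 3| = |-S + -(n₁ ^ 3 + n₂ ^ 3 + m₁ ^ 3 + m₂ ^ 3)| := by rw [hS]; ring_nf
      _ ≤ _ := (abs_add_le _ _).trans_eq (by rw [abs_neg, abs_neg])
  have hmain : n₃ ^ 2 ≤ 2 * |S| := by
    linarith [hcubes n₁ h1, hcubes n₂ h2, hcubes m₁ h3, hcubes m₂ h4, sq_nonneg n₃]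
  have hmainR : ((n₃ ^ 2 : ℤ) : ℝ) ≤ ((2 * |S| : ℤ) : ℝ) := Int.cast_le.mpr hmain
  push_cast at hmainR
  linarith
end

section
/- Let $s < 1/2$ and $1 \le p \le \infty$. There exist a constant $C > 0$ and two sequences $(u_n)_{n \in \mathbb{N}}$, $(\tilde{u}_n)_{n \in \mathbb{N}}$ of smooth functions $\mathbb{R} \times \mathbb{R} \to \mathbb{C}$, each $2\pi$-periodic in the second variable and each solving the focusing mKdV equation $\partial_t u + \partial_x^3 u = |u|^2 \partial_x u$ at every point, such that: (1) $\sup_{n} \| u_n(0, \cdot) \|_{\mathcal{F}L^{s,p}} < \infty$ and $\sup_{n} \| \tilde{u}_n(0, \cdot) \|_{\mathcal{F}L^{s,p}} < \infty$; (2) $\lim_{n \to \infty} \| u_n(0,\cdot) - \tilde{u}_n(0,\cdot) \|_{\mathcal{F}L^{s,p}} = 0$; (3) for every $T > 0$, $\liminf_{n \to \infty} \sup_{t \in [-T, T]} \| u_n(t,\cdot) - \tilde{u}_n(t,\cdot) \|_{\mathcal{F}L^{s,p}} \ge C$. -/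
open scoped ENNReal

/-- The Japanese bracket `⟨x⟩ = (1 + |x|²)^(1/2)`. -/
noncomputable def jb (x : ℝ) : ℝ := Real.sqrt (1 + x ^ 2)

/-- The `n`-th Fourier coefficient of a `2π`-periodic function `f : ℝ → ℂ`. -/
noncomputable def fourierCoef (f : ℝ → ℂ) (n : ℤ) : ℂ :=
  (1 / (2 * Real.pi) : ℂ) * ∫ x in (0 : ℝ)..(2 * Real.pi),
    f x * Complex.exp (-Complex.I * (n : ℂ) * (x : ℂ))

/-- The Fourier–Lebesgue norm `‖f‖_{FL^{s,p}} = ‖⟨n⟩^s f̂(n)‖_{ℓ^p_n}`, valued in `ℝ≥0∞`,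
with the usual `sup` modification for `p = ∞`. -/
noncomputable def FLnorm (s : ℝ) (p : ℝ≥0∞) (f : ℝ → ℂ) : ℝ≥0∞ :=
  if p = ⊤ then ⨆ n : ℤ, ENNReal.ofReal (jb (n : ℝ) ^ s) * (‖fourierCoef f n‖₊ : ℝ≥0∞)
  else (∑' n : ℤ, (ENNReal.ofReal (jb (n : ℝ) ^ s) * (‖fourierCoef f n‖₊ : ℝ≥0∞)) ^ p.toReal) ^
    (1 / p.toReal)

namespace Stmt14

lemma jb_pos (x : ℝ) : 0 < jb x := Real.sqrt_pos.2 (by positivity)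

lemma one_le_jb (x : ℝ) : 1 ≤ jb x := Real.one_le_sqrt.2 (by nlinarith)

lemma le_jb (x : ℝ) (hx : 0 ≤ x) : x ≤ jb x := by
  have h1 : x = Real.sqrt (x ^ 2) := (Real.sqrt_sq hx).symm
  calc x = Real.sqrt (x ^ 2) := h1
    _ ≤ Real.sqrt (1 + x ^ 2) := Real.sqrt_le_sqrt (by nlinarith)

lemma fourierCoef_single (c : ℂ) (k m : ℤ) :
    fourierCoef (fun x : ℝ => c * Complex.exp (Complex.I * (k : ℂ) * (x : ℂ))) m
      = if m = k then c else 0 := by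
  unfold fourierCoef
  have hint : ∀ x : ℝ, (c * Complex.exp (Complex.I * (k:ℂ) * (x:ℂ)))
      * Complex.exp (-Complex.I * (m:ℂ) * (x:ℂ))
      = c * Complex.exp ((Complex.I * ((k:ℂ) - m)) * (x:ℂ)) := by
    intro x
    rw [mul_assoc, ← Complex.exp_add]
    congr 1
    ring
  simp only [hint]
  rw [intervalIntegral.integral_const_mul]
  by_cases h : m = k
  · subst h
    have h0 : (Complex.I * ((m:ℂ) - m)) = 0 := by ring
    rw [h0]
    simp only [zero_mul, Complex.exp_zero, if_pos rfl]
    rw [intervalIntegral.integral_const]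
    have hpi : (Real.pi : ℂ) ≠ 0 := by
      exact_mod_cast Real.pi_ne_zero
    push_cast
    field_simp
    rw [sub_zero, Complex.real_smul, mul_one]; push_cast; ring
  · have hkm : (Complex.I * ((k:ℂ) - m)) ≠ 0 := by
      apply mul_ne_zero Complex.I_ne_zero
      rw [sub_ne_zero]
      exact_mod_cast Ne.symm h
    rw [integral_exp_mul_complex hkm]
    have h2 : Complex.I * ((k:ℂ) - m) * ((2 * Real.pi : ℝ):ℂ)
        = ((k - m : ℤ) : ℂ) * (2 * (Real.pi:ℂ) * Complex.I) := by push_cast; ring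
    rw [show ((0:ℝ):ℂ) = 0 from rfl] at *
    rw [h2]
    rw [Complex.exp_int_mul_two_pi_mul_I]
    simp [h]

lemma FLnorm_single (s : ℝ) (p : ℝ≥0∞) (hp : 1 ≤ p) (c : ℂ) (k : ℤ) :
    FLnorm s p (fun x : ℝ => c * Complex.exp (Complex.I * (k : ℂ) * (x : ℂ)))
      = ENNReal.ofReal (jb (k:ℝ) ^ s) * (‖c‖₊ : ℝ≥0∞) := by
  have hco := fourierCoef_single c k
  unfold FLnorm
  by_cases hptop : p = ⊤
  · rw [if_pos hptop]
    apply le_antisymm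
    · apply iSup_le
      intro m
      rcases eq_or_ne m k with hm | hm
      · subst hm; rw [hco, if_pos rfl]
      · rw [hco, if_neg hm]; simp
    · have h := le_iSup (fun m : ℤ =>
        ENNReal.ofReal (jb (m:ℝ) ^ s) *
          (‖fourierCoef (fun x : ℝ => c * Complex.exp (Complex.I * (k : ℂ) * (x : ℂ))) m‖₊ : ℝ≥0∞)) k
      rw [hco, if_pos rfl] at h
      exact h
  · rw [if_neg hptop]
    have hq : 0 < p.toReal :=
      ENNReal.toReal_pos (lt_of_lt_of_le zero_lt_one hp).ne' hptop
    rw [tsum_eq_single k ?_]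
    · rw [hco, if_pos rfl, one_div, ENNReal.rpow_rpow_inv hq.ne']
    · intro m hm
      rw [hco, if_neg hm]
      simp [ENNReal.zero_rpow_of_pos hq]

lemma hasDerivAt_mode (c : ℂ) (k : ℝ) (x : ℝ) :
    HasDerivAt (fun x' : ℝ => c * Complex.exp (Complex.I * (k:ℂ) * (x':ℝ)))
      (c * (Complex.I * k) * Complex.exp (Complex.I * (k:ℂ) * (x:ℝ))) x := by
  have h1 : HasDerivAt (fun x' : ℝ => ((x' : ℂ))) 1 x := by
    simpa using (hasDerivAt_id x).ofReal_comp
  have h2 := ((h1.const_mul (Complex.I * k)).cexp).const_mul c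
  exact h2.congr_deriv (by ring)

lemma deriv_mode (c : ℂ) (k : ℝ) (x : ℝ) :
    deriv (fun x' : ℝ => c * Complex.exp (Complex.I * (k:ℂ) * (x':ℝ))) x
      = c * (Complex.I * k) * Complex.exp (Complex.I * (k:ℂ) * (x:ℝ)) :=
  (hasDerivAt_mode c k x).deriv

lemma deriv_mode_t (c : ℂ) (w : ℝ) (E : ℂ) (t : ℝ) :
    deriv (fun t' : ℝ => c * Complex.exp (Complex.I * (w:ℂ) * (t':ℝ)) * E) t
      = c * (Complex.I * w) * Complex.exp (Complex.I * (w:ℂ) * (t:ℝ)) * E :=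
  ((hasDerivAt_mode c w t).mul_const E).deriv

lemma iteratedDeriv_mode3 (c : ℂ) (k : ℝ) (x : ℝ) :
    iteratedDeriv 3 (fun x' : ℝ => c * Complex.exp (Complex.I * (k:ℂ) * (x':ℝ))) x
      = (c * (Complex.I * k)^3) * Complex.exp (Complex.I * (k:ℂ) * (x:ℝ)) := by
  have hd : ∀ c' : ℂ, deriv (fun x' : ℝ => c' * Complex.exp (Complex.I * (k:ℂ) * (x':ℝ)))
      = fun x : ℝ => c' * (Complex.I * k) * Complex.exp (Complex.I * (k:ℂ) * (x:ℝ)) :=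
    fun c' => funext (deriv_mode c' k)
  rw [show (3:ℕ) = 2 + 1 from rfl, iteratedDeriv_succ', hd]
  rw [show (2:ℕ) = 1 + 1 from rfl, iteratedDeriv_succ', hd]
  rw [show (1:ℕ) = 0 + 1 from rfl, iteratedDeriv_succ', hd, iteratedDeriv_zero]
  ring

lemma abs_mode (a w k t x : ℝ) (ha : 0 ≤ a) :
    ‖(a:ℂ) * Complex.exp (Complex.I * (w:ℂ) * (t:ℝ))
      * Complex.exp (Complex.I * (k:ℂ) * (x:ℝ))‖ = a := by
  rw [norm_mul, norm_mul, Complex.norm_exp, Complex.norm_exp]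
  have h1 : (Complex.I * (w:ℂ) * (t:ℝ)).re = 0 := by simp
  have h2 : (Complex.I * (k:ℂ) * (x:ℝ)).re = 0 := by simp
  rw [h1, h2]
  simp [Complex.norm_real, abs_of_nonneg ha]

lemma mode_solves (a k w : ℝ) (ha : 0 ≤ a) (hw : w = k ^ 3 + a ^ 2 * k) (t x : ℝ) :
    deriv (fun t' : ℝ => (a:ℂ) * Complex.exp (Complex.I * (w:ℂ) * (t':ℝ))
        * Complex.exp (Complex.I * (k:ℂ) * (x:ℝ))) t
      + iteratedDeriv 3 (fun x' : ℝ => (a:ℂ) * Complex.exp (Complex.I * (w:ℂ) * (t:ℝ))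
        * Complex.exp (Complex.I * (k:ℂ) * (x':ℝ))) x
      = ((‖(a:ℂ) * Complex.exp (Complex.I * (w:ℂ) * (t:ℝ))
          * Complex.exp (Complex.I * (k:ℂ) * (x:ℝ))‖ ^ 2 : ℝ) : ℂ)
        * deriv (fun x' : ℝ => (a:ℂ) * Complex.exp (Complex.I * (w:ℂ) * (t:ℝ))
          * Complex.exp (Complex.I * (k:ℂ) * (x':ℝ))) x := by
  rw [deriv_mode_t, iteratedDeriv_mode3, deriv_mode, abs_mode a w k t x ha]
  have hI3 : Complex.I ^ 3 = -Complex.I := by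
    rw [pow_succ, Complex.I_sq]; ring
  have hwc : (w : ℂ) = (k:ℂ)^3 + (a:ℂ)^2 * (k:ℂ) := by rw [hw]; push_cast; ring
  rw [mul_pow, hI3, hwc]
  push_cast
  ring

lemma mode_contDiff (a w k : ℝ) :
    ContDiff ℝ (⊤ : ℕ∞) (fun q : ℝ × ℝ => (a:ℂ) * Complex.exp (Complex.I * (w:ℂ) * (q.1:ℝ))
      * Complex.exp (Complex.I * (k:ℂ) * (q.2:ℝ))) := by
  have h1 : ContDiff ℝ (⊤ : ℕ∞) (fun q : ℝ × ℝ => ((q.1 : ℝ) : ℂ)) :=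
    Complex.ofRealCLM.contDiff.comp contDiff_fst
  have h2 : ContDiff ℝ (⊤ : ℕ∞) (fun q : ℝ × ℝ => ((q.2 : ℝ) : ℂ)) :=
    Complex.ofRealCLM.contDiff.comp contDiff_snd
  exact (contDiff_const.mul ((contDiff_const.mul h1).cexp)).mul ((contDiff_const.mul h2).cexp)

lemma mode_periodic (c : ℂ) (n : ℕ) (x : ℝ) :
    c * Complex.exp (Complex.I * ((n:ℝ):ℂ) * ((x + 2 * Real.pi : ℝ):ℂ))
      = c * Complex.exp (Complex.I * ((n:ℝ):ℂ) * (x:ℝ)) := by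
  congr 1
  have h : Complex.I * ((n:ℝ):ℂ) * ((x + 2 * Real.pi : ℝ):ℂ)
      = Complex.I * ((n:ℝ):ℂ) * (x:ℝ) + ((n:ℤ):ℂ) * (2 * (Real.pi:ℂ) * Complex.I) := by
    push_cast; ring
  rw [h, Complex.exp_add, Complex.exp_int_mul_two_pi_mul_I, mul_one]

end Stmt14


namespace Stmt14

variable (s : ℝ)

noncomputable def Aa (n : ℕ) : ℝ := jb n ^ (-s)
noncomputable def Dd (n : ℕ) : ℝ := jb n ^ (-s - 1/2)
noncomputable def Qq (n : ℕ) : ℝ := jb n ^ (s - 1/2)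
noncomputable def Bb (n : ℕ) : ℝ := Real.sqrt (Aa s n ^ 2 + Dd s n)
noncomputable def omA (n : ℕ) : ℝ := (n:ℝ)^3 + Aa s n ^ 2 * (n:ℝ)
noncomputable def omB (n : ℕ) : ℝ := (n:ℝ)^3 + Bb s n ^ 2 * (n:ℝ)
noncomputable def UU (n : ℕ) (t x : ℝ) : ℂ :=
  ((Aa s n : ℝ) : ℂ) * Complex.exp (Complex.I * ((omA s n : ℝ):ℂ) * (t:ℝ))
    * Complex.exp (Complex.I * (((n:ℝ)) : ℂ) * (x:ℝ))
noncomputable def VV (n : ℕ) (t x : ℝ) : ℂ :=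
  ((Bb s n : ℝ) : ℂ) * Complex.exp (Complex.I * ((omB s n : ℝ):ℂ) * (t:ℝ))
    * Complex.exp (Complex.I * (((n:ℝ)) : ℂ) * (x:ℝ))

end Stmt14


open Stmt14 in
theorem stmt14 (s : ℝ) (hs : s < 1 / 2) (p : ℝ≥0∞) (hp : 1 ≤ p) :
    ∃ C : ℝ, 0 < C ∧ ∃ u v : ℕ → ℝ → ℝ → ℂ,
      (∀ n, ContDiff ℝ (⊤ : ℕ∞) (fun q : ℝ × ℝ => u n q.1 q.2)) ∧
      (∀ n, ContDiff ℝ (⊤ : ℕ∞) (fun q : ℝ × ℝ => v n q.1 q.2)) ∧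
      (∀ n, ∀ t x : ℝ, u n t (x + 2 * Real.pi) = u n t x) ∧
      (∀ n, ∀ t x : ℝ, v n t (x + 2 * Real.pi) = v n t x) ∧
      (∀ n, ∀ t x : ℝ,
        deriv (fun t' => u n t' x) t + iteratedDeriv 3 (fun x' => u n t x') x =
          ((‖u n t x‖ ^ 2 : ℝ) : ℂ) * deriv (fun x' => u n t x') x) ∧
      (∀ n, ∀ t x : ℝ,
        deriv (fun t' => v n t' x) t + iteratedDeriv 3 (fun x' => v n t x') x =
          ((‖v n t x‖ ^ 2 : ℝ) : ℂ) * deriv (fun x' => v n t x') x) ∧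
      (∃ M : ℝ, (∀ n, FLnorm s p (u n 0) ≤ ENNReal.ofReal M) ∧
        (∀ n, FLnorm s p (v n 0) ≤ ENNReal.ofReal M)) ∧
      Filter.Tendsto (fun n => FLnorm s p (fun x => u n 0 x - v n 0 x))
        Filter.atTop (nhds 0) ∧
      (∀ T : ℝ, 0 < T →
        ENNReal.ofReal C ≤ Filter.liminf
          (fun n => ⨆ t ∈ Set.Icc (-T) T, FLnorm s p (fun x => u n t x - v n t x))
          Filter.atTop) := by
  -- basic positivity facts
  have hA : ∀ n : ℕ, 0 < Aa s n := fun n => Real.rpow_pos_of_pos (jb_pos _) _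
  have hD : ∀ n : ℕ, 0 < Dd s n := fun n => Real.rpow_pos_of_pos (jb_pos _) _
  have hBsq : ∀ n : ℕ, Bb s n ^ 2 = Aa s n ^ 2 + Dd s n := fun n =>
    Real.sq_sqrt (by nlinarith [hD n, sq_nonneg (Aa s n)])
  have hB : ∀ n : ℕ, 0 < Bb s n := fun n => Real.sqrt_pos.2 (by nlinarith [hD n, sq_nonneg (Aa s n)])
  have hAB : ∀ n : ℕ, Aa s n ≤ Bb s n := by
    intro n
    have h1 : Aa s n = Real.sqrt (Aa s n ^ 2) := (Real.sqrt_sq (hA n).le).symm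
    rw [h1, Bb]
    exact Real.sqrt_le_sqrt (by nlinarith [hD n])
  have hJs : ∀ n : ℕ, 0 < jb (n:ℝ) ^ s := fun n => Real.rpow_pos_of_pos (jb_pos _) _
  have hpow : ∀ (n : ℕ) (t u : ℝ), jb (n:ℝ) ^ t * jb (n:ℝ) ^ u = jb (n:ℝ) ^ (t + u) :=
    fun n t u => (Real.rpow_add (jb_pos _) t u).symm
  have hF1 : ∀ n : ℕ, jb (n:ℝ) ^ s * Aa s n = 1 := by
    intro n
    rw [Aa, hpow, show s + -s = 0 by ring, Real.rpow_zero]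
  have hF2 : ∀ n : ℕ, jb (n:ℝ) ^ s * (jb (n:ℝ) ^ s * Dd s n) = Qq s n := by
    intro n
    rw [Dd, Qq, hpow, hpow, show s + (s + (-s - 1/2)) = s - 1/2 by ring]
  have hQ1 : ∀ n : ℕ, Qq s n ≤ 1 := fun n =>
    Real.rpow_le_one_of_one_le_of_nonpos (one_le_jb _) (by linarith)
  have hjbt : Filter.Tendsto (fun n : ℕ => jb (n:ℝ)) Filter.atTop Filter.atTop :=
    Filter.tendsto_atTop_mono (fun n => le_jb _ (Nat.cast_nonneg n))
      tendsto_natCast_atTop_atTop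
  have hQto0 : Filter.Tendsto (fun n : ℕ => Qq s n) Filter.atTop (nhds 0) := by
    have h := (tendsto_rpow_neg_atTop (show (0:ℝ) < 1/2 - s by linarith)).comp hjbt
    have hfun : (fun n : ℕ => Qq s n)
        = (fun x : ℝ => x ^ (-(1/2 - s))) ∘ (fun n : ℕ => jb (n:ℝ)) := by
      funext n
      simp only [Function.comp, Qq]
      congr 1
      ring
    rw [hfun]
    exact h
  -- Dd * n → ∞
  have hjble : ∀ n : ℕ, 1 ≤ n → jb (n:ℝ) / 2 ≤ (n:ℝ) := by
    intro n hn
    have hn1 : (1:ℝ) ≤ (n:ℝ) := by exact_mod_cast hn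
    have h1 : jb (n:ℝ) ≤ 2 * n := by
      rw [show jb (n:ℝ) = Real.sqrt (1 + (n:ℝ)^2) from rfl,
        show (2*(n:ℝ)) = Real.sqrt ((2*(n:ℝ))^2) from (Real.sqrt_sq (by linarith)).symm]
      exact Real.sqrt_le_sqrt (by nlinarith)
    linarith
  have hDn : Filter.Tendsto (fun n : ℕ => Dd s n * n) Filter.atTop Filter.atTop := by
    have hg : Filter.Tendsto (fun n : ℕ => jb (n:ℝ) ^ (1/2 - s) / 2)
        Filter.atTop Filter.atTop :=
      ((tendsto_rpow_atTop (show (0:ℝ) < 1/2 - s by linarith)).comp hjbt).atTop_div_const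
        two_pos
    apply Filter.tendsto_atTop_mono' _ _ hg
    filter_upwards [Filter.eventually_ge_atTop 1] with n hn
    have h1 : Dd s n * (jb (n:ℝ) / 2) = jb (n:ℝ) ^ (1/2 - s) / 2 := by
      rw [Dd, show jb (n:ℝ) ^ (1/2 - s) = jb (n:ℝ) ^ (-s - 1/2) * jb (n:ℝ) ^ (1:ℝ) by
        rw [hpow, show (-s - 1/2) + 1 = 1/2 - s by ring], Real.rpow_one]
      ring
    calc jb (n:ℝ) ^ (1/2 - s) / 2 = Dd s n * (jb (n:ℝ) / 2) := h1.symm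
      _ ≤ Dd s n * n := mul_le_mul_of_nonneg_left (hjble n hn) (hD n).le
  -- the key small quantity
  have hEps : ∀ n : ℕ, jb (n:ℝ) ^ s * (Bb s n - Aa s n) ≤ Qq s n := by
    intro n
    have h3 : (Bb s n - Aa s n) * (Bb s n + Aa s n) = Dd s n := by
      nlinarith [hBsq n]
    have step1 : (Bb s n - Aa s n) * (2 * Aa s n) ≤ Dd s n := by
      nlinarith [hAB n, hA n]
    have step2 : jb (n:ℝ) ^ s * (jb (n:ℝ) ^ s * ((Bb s n - Aa s n) * (2 * Aa s n)))
        ≤ Qq s n := by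
      rw [← hF2 n]
      apply mul_le_mul_of_nonneg_left _ (hJs n).le
      exact mul_le_mul_of_nonneg_left step1 (hJs n).le
    have step3 : jb (n:ℝ) ^ s * (jb (n:ℝ) ^ s * ((Bb s n - Aa s n) * (2 * Aa s n)))
        = 2 * (jb (n:ℝ) ^ s * (Bb s n - Aa s n)) := by
      have h1 := hF1 n
      linear_combination (2 * (jb (n:ℝ) ^ s * (Bb s n - Aa s n))) * h1
    have hnn : 0 ≤ jb (n:ℝ) ^ s * (Bb s n - Aa s n) :=
      mul_nonneg (hJs n).le (by linarith [hAB n])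
    nlinarith [step2, step3]
  -- FLnorm of a single mode with natural frequency
  have hFL : ∀ (c : ℂ) (n : ℕ),
      FLnorm s p (fun x : ℝ => c * Complex.exp (Complex.I * (((n:ℝ)) : ℂ) * (x:ℝ)))
        = ENNReal.ofReal (jb (n:ℝ) ^ s) * (‖c‖₊ : ℝ≥0∞) := by
    intro c n
    have h := FLnorm_single s p hp c (n : ℤ)
    have hfun : (fun x : ℝ => c * Complex.exp (Complex.I * (((n:ℤ)) : ℂ) * (x:ℝ)))
        = (fun x : ℝ => c * Complex.exp (Complex.I * (((n:ℝ)) : ℂ) * (x:ℝ))) := by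
      norm_cast
    rw [hfun] at h
    rw [h]
    norm_num
  have hnormR : ∀ r : ℝ, 0 ≤ r → ((‖((r:ℝ):ℂ)‖₊ : ℝ≥0∞)) = ENNReal.ofReal r := by
    intro r hr
    rw [← enorm_eq_nnnorm, ← ofReal_norm, Complex.norm_real, Real.norm_eq_abs, abs_of_nonneg hr]
  have hUdiff : ∀ (n : ℕ) (t : ℝ), (fun x : ℝ => UU s n t x - VV s n t x)
      = fun x : ℝ => (((Aa s n : ℝ) : ℂ) * Complex.exp (Complex.I * ((omA s n : ℝ):ℂ) * (t:ℝ))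
          - ((Bb s n : ℝ) : ℂ) * Complex.exp (Complex.I * ((omB s n : ℝ):ℂ) * (t:ℝ)))
        * Complex.exp (Complex.I * (((n:ℝ)) : ℂ) * (x:ℝ)) := by
    intro n t
    funext x
    simp only [UU, VV]
    ring
  refine ⟨1, one_pos, UU s, VV s, ?_, ?_, ?_, ?_, ?_, ?_, ?_, ?_, ?_⟩
  · intro n
    simp only [UU]
    exact mode_contDiff (Aa s n) (omA s n) (n:ℝ)
  · intro n
    simp only [VV]
    exact mode_contDiff (Bb s n) (omB s n) (n:ℝ)
  · intro n t x
    simp only [UU]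
    exact mode_periodic _ n x
  · intro n t x
    simp only [VV]
    exact mode_periodic _ n x
  · intro n t x
    simp only [UU]
    exact mode_solves (Aa s n) (n:ℝ) (omA s n) (hA n).le rfl t x
  · intro n t x
    simp only [VV]
    exact mode_solves (Bb s n) (n:ℝ) (omB s n) (hB n).le rfl t x
  · -- uniform bound with M = 2
    refine ⟨2, ?_, ?_⟩
    · intro n
      have hU0 : UU s n 0 = fun x : ℝ =>
          ((Aa s n : ℝ) : ℂ) * Complex.exp (Complex.I * (((n:ℝ)) : ℂ) * (x:ℝ)) := by
        funext x
        simp only [UU, Complex.ofReal_zero, mul_zero, Complex.exp_zero, mul_one]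
      rw [hU0, hFL, hnormR _ (hA n).le, ← ENNReal.ofReal_mul (hJs n).le, hF1 n]
      exact ENNReal.ofReal_le_ofReal (by norm_num)
    · intro n
      have hV0 : VV s n 0 = fun x : ℝ =>
          ((Bb s n : ℝ) : ℂ) * Complex.exp (Complex.I * (((n:ℝ)) : ℂ) * (x:ℝ)) := by
        funext x
        simp only [VV, Complex.ofReal_zero, mul_zero, Complex.exp_zero, mul_one]
      rw [hV0, hFL, hnormR _ (hB n).le, ← ENNReal.ofReal_mul (hJs n).le]
      apply ENNReal.ofReal_le_ofReal
      -- jb^s * Bb ≤ 2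
      have e1 := hBsq n
      have e2 := hF1 n
      have e3 := hF2 n
      have h2 : (jb (n:ℝ) ^ s * Bb s n) ^ 2 = 1 + Qq s n := by
        linear_combination (jb (n:ℝ) ^ s)^2 * e1 + (jb (n:ℝ) ^ s * Aa s n + 1) * e2 + e3
      nlinarith [h2, hQ1 n, mul_pos (hJs n) (hB n), sq_nonneg (jb (n:ℝ) ^ s * Bb s n - 2)]
  · -- initial data difference tends to 0
    have hseq : ∀ n : ℕ, FLnorm s p (fun x : ℝ => UU s n 0 x - VV s n 0 x)
        = ENNReal.ofReal (jb (n:ℝ) ^ s * (Bb s n - Aa s n)) := by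
      intro n
      rw [hUdiff n 0]
      simp only [Complex.ofReal_zero, mul_zero, Complex.exp_zero, mul_one]
      rw [hFL]
      have hc : ((Aa s n : ℝ) : ℂ) - ((Bb s n : ℝ) : ℂ)
          = (((Aa s n - Bb s n : ℝ)) : ℂ) := by push_cast; ring
      rw [hc, ← enorm_eq_nnnorm, ← ofReal_norm, Complex.norm_real, Real.norm_eq_abs,
        abs_of_nonpos (by linarith [hAB n]), ← ENNReal.ofReal_mul (hJs n).le]
      congr 1
      ring
    simp only [hseq]
    have hlim : Filter.Tendsto (fun n : ℕ => ENNReal.ofReal (Qq s n))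
        Filter.atTop (nhds 0) := by
      rw [show (0:ℝ≥0∞) = ENNReal.ofReal 0 by simp]
      exact ENNReal.tendsto_ofReal hQto0
    apply tendsto_of_tendsto_of_tendsto_of_le_of_le tendsto_const_nhds hlim
    · intro n
      exact zero_le
    · intro n
      exact ENNReal.ofReal_le_ofReal (hEps n)
  · -- liminf lower bound
    intro T hT
    rw [ENNReal.ofReal_one]
    apply Filter.le_liminf_of_le (by isBoundedDefault)
    filter_upwards [hDn.eventually_ge_atTop (Real.pi / T)] with n hn
    have hr : 0 < Dd s n * n := lt_of_lt_of_le (div_pos Real.pi_pos hT) hn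
    set t₀ : ℝ := Real.pi / (Dd s n * n) with ht₀def
    have ht₀pos : 0 < t₀ := div_pos Real.pi_pos hr
    have ht₀le : t₀ ≤ T := by
      rw [ht₀def, div_le_iff₀ hr]
      calc Real.pi = (Real.pi / T) * T := by field_simp
        _ ≤ (Dd s n * n) * T := mul_le_mul_of_nonneg_right hn hT.le
        _ = T * (Dd s n * n) := by ring
    have ht₀ : t₀ ∈ Set.Icc (-T) T := ⟨by linarith, ht₀le⟩
    refine le_trans ?_ (le_biSup _ ht₀)
    rw [hUdiff n t₀, hFL]
    have hwdiff : omB s n * t₀ = omA s n * t₀ + Real.pi := by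
      have h1 : omB s n = omA s n + Dd s n * n := by
        rw [omB, omA, hBsq n]
        ring
      rw [h1, add_mul, ht₀def]
      congr 1
      field_simp
      exact div_self hr.ne'
    have hcoef : ((Aa s n : ℝ) : ℂ) * Complex.exp (Complex.I * ((omA s n : ℝ):ℂ) * (t₀:ℝ))
        - ((Bb s n : ℝ) : ℂ) * Complex.exp (Complex.I * ((omB s n : ℝ):ℂ) * (t₀:ℝ))
        = Complex.exp (Complex.I * ((omA s n : ℝ):ℂ) * (t₀:ℝ))
          * (((Aa s n + Bb s n : ℝ)) : ℂ) := by
      have h2 : Complex.I * ((omB s n : ℝ):ℂ) * (t₀:ℝ)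
          = Complex.I * ((omA s n : ℝ):ℂ) * (t₀:ℝ) + (Real.pi : ℂ) * Complex.I := by
        calc Complex.I * ((omB s n : ℝ):ℂ) * (t₀:ℝ)
            = Complex.I * (((omB s n * t₀ : ℝ)):ℂ) := by push_cast; ring
          _ = Complex.I * (((omA s n * t₀ + Real.pi : ℝ)):ℂ) := by rw [hwdiff]
          _ = Complex.I * ((omA s n : ℝ):ℂ) * (t₀:ℝ) + (Real.pi : ℂ) * Complex.I := by
              push_cast; ring
      rw [h2, Complex.exp_add, Complex.exp_pi_mul_I]
      push_cast
      ring
    rw [hcoef]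
    have hnormval : ((‖Complex.exp (Complex.I * ((omA s n : ℝ):ℂ) * (t₀:ℝ))
        * (((Aa s n + Bb s n : ℝ)) : ℂ)‖₊ : ℝ≥0∞)) = ENNReal.ofReal (Aa s n + Bb s n) := by
      rw [← enorm_eq_nnnorm, ← ofReal_norm, norm_mul]
      have habs : ‖Complex.exp (Complex.I * ((omA s n : ℝ):ℂ) * (t₀:ℝ))‖ = 1 := by
        rw [Complex.norm_exp]
        have : (Complex.I * ((omA s n : ℝ):ℂ) * (t₀:ℝ)).re = 0 := by simp
        rw [this, Real.exp_zero]
      rw [habs, one_mul, Complex.norm_real, Real.norm_eq_abs,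
        abs_of_nonneg (by linarith [hA n, hB n])]
    rw [hnormval, ← ENNReal.ofReal_mul (hJs n).le, ← ENNReal.ofReal_one]
    apply ENNReal.ofReal_le_ofReal
    have h1 := hF1 n
    nlinarith [mul_pos (hJs n) (hB n)]
end

section
/- Suppose either ($1 \le p \le 2$ and $s > 0$) or ($2 < p < \infty$ and $s > 1/2 - 1/(2p)$). Then there exist constants $C > 0$ and $\varepsilon > 0$ such that for every $N \in \mathbb{N}$ and every $a : \mathbb{Z} \to \mathbb{C}$ with $\| \langle n \rangle^{s} a(n) \|_{\ell^p_n} < \infty$, $\left| \sum_{|n| > N} \ \sum_{\substack{(n_1, n_2, n_3) \in \Lambda(n) \\ 4 n_1^2 \le |n_3|, \ 4 n_2^2 \le |n_3|}} \frac{n \, n_3}{3 (n_1+n_2)(n_1+n_3)(n_2+n_3)} \, a(n_1) \, \overline{a(-n_2)} \, a(n_3) \, \overline{a(n)} \right| \le C \, N^{-\varepsilon} \, \| \langle n \rangle^{s} a(n) \|_{\ell^p_n}^4$. -/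
/-!
On the region `n₃` dominates: `2 (|n₁| + |n₂|) ≤ |n₃|`, so `n`, `n₃`, `n₁ + n₃`, `n₂ + n₃` are
comparable and the symbol `n n₃ / (3 m (n₁ + n₃) (n₂ + n₃))`, `m = n₁ + n₂`, is `O(1 / |m|)`;
moreover `m² ≤ |n₃|` and `N < |n|`. Writing `b = ⟨·⟩^s₀ |a|`, one factor `⟨n₃⟩^(-s₀)` of the
weight gives `N^(-s₀)` and the other `|m|^(-2 s₀)`, so a term is at most
`N^(-s₀) |m|^(-1-2s₀) b(n₁) b(n₁ - m) b(n₃) b(n₃ + m)`. Summing over `(m, n₁, n₃)`,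
Cauchy–Schwarz in `n₁` and in `n₃` and the summability of `|m|^(-1-2s₀)` give `N^(-s₀) ‖b‖₂⁴`.
Finally `‖b‖₂ ≲ ‖⟨·⟩^s a‖_p`: for `p ≤ 2` with `s₀ = s` since `ℓ^p ⊆ ℓ²`, and for `p > 2` by
Hölder, losing `1/2 - 3/(4p)` derivatives.
-/

open Finset

lemma rpow_neg_le_of_le_two_mul {x y s : ℝ} (hy : 0 < y) (hs : 0 ≤ s) (h : y ≤ 2 * x) :
    x ^ (-s) ≤ 2 ^ s * y ^ (-s) := by
  calc x ^ (-s) ≤ (y / 2) ^ (-s) :=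
        Real.rpow_le_rpow_of_nonpos (by positivity) (by linarith) (by linarith)
    _ = 2 ^ s * y ^ (-s) := by
      rw [Real.div_rpow hy.le zero_le_two, Real.rpow_neg zero_le_two]
      field_simp

lemma one_le_jb (x : ℝ) : 1 ≤ jb x :=
  Real.le_sqrt_of_sq_le (by nlinarith [sq_nonneg x])

lemma jb_pos (x : ℝ) : 0 < jb x := one_pos.trans_le (one_le_jb x)

lemma abs_le_jb (x : ℝ) : |x| ≤ jb x := Real.abs_le_sqrt (by linarith)

lemma jb_le_two_mul_jb {x y : ℝ} (h : |x| ≤ 2 * |y|) : jb x ≤ 2 * jb y := by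
  refine Real.sqrt_le_iff.mpr ⟨by linarith [jb_pos y], ?_⟩
  rw [mul_pow, jb, Real.sq_sqrt (by positivity)]
  nlinarith [sq_abs x, sq_abs y, abs_nonneg x]

lemma summable_jb_rpow_neg {t : ℝ} (ht : 1 < t) : Summable fun k : ℤ => jb k ^ (-t) := by
  refine Summable.of_norm_bounded_eventually (Real.summable_abs_int_rpow ht) ?_
  filter_upwards [(Set.finite_singleton (0 : ℤ)).compl_mem_cofinite] with k hk
  have hk1 : (1 : ℝ) ≤ |(k : ℝ)| := by
    rw [← Int.cast_abs]; exact_mod_cast Int.one_le_abs hk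
  rw [Real.norm_of_nonneg (Real.rpow_nonneg (jb_pos _).le _)]
  exact Real.rpow_le_rpow_of_nonpos (one_pos.trans_le hk1) (abs_le_jb _) (by linarith)

lemma jb_rpow_neg_le_of_abs_le {x y : ℝ} {s : ℝ} (hs : 0 ≤ s) (h : |y| ≤ 2 * |x|) :
    jb x ^ (-s) ≤ 2 ^ s * jb y ^ (-s) :=
  rpow_neg_le_of_le_two_mul (jb_pos y) hs (jb_le_two_mul_jb h)

section LpEmbedding

variable {ι : Type*} {p : ℝ} {c : ι → ℝ}

lemma summable_sq_and_tsum_sq_le_of_le_two (hp : 0 < p) (hp2 : p ≤ 2) (hc : ∀ i, 0 ≤ c i)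
    (hcp : Summable fun i => c i ^ p) :
    Summable (fun i => c i ^ 2) ∧ ∑' i, c i ^ 2 ≤ ((∑' i, c i ^ p) ^ (1 / p)) ^ 2 := by
  have hcp0 : ∀ i, 0 ≤ c i ^ p := fun i => Real.rpow_nonneg (hc i) p
  set T := ∑' i, c i ^ p
  set S := T ^ (1 / p) with hS_def
  have hT : 0 ≤ T := tsum_nonneg hcp0
  have hS : 0 ≤ S := Real.rpow_nonneg hT _
  have hTS : T = S ^ p := by rw [hS_def, one_div, Real.rpow_inv_rpow hT hp.ne']
  have hcS : ∀ i, c i ≤ S := fun i => by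
    calc c i = (c i ^ p) ^ (1 / p) := by rw [one_div, Real.rpow_rpow_inv (hc i) hp.ne']
      _ ≤ S := Real.rpow_le_rpow (hcp0 i) (hcp.le_tsum i fun j _ => hcp0 j) (by positivity)
  have hkey : ∀ i, c i ^ 2 ≤ S ^ (2 - p) * c i ^ p := fun i => by
    calc c i ^ 2 = c i ^ (2 - p) * c i ^ p := by
          rw [← Real.rpow_two, Real.rpow_of_add_eq (hc i) two_ne_zero (sub_add_cancel 2 p)]
      _ ≤ S ^ (2 - p) * c i ^ p :=
          mul_le_mul_of_nonneg_right (Real.rpow_le_rpow (hc i) (hcS i) (by linarith)) (hcp0 i)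
  have hsum : Summable fun i => c i ^ 2 :=
    (hcp.mul_left _).of_nonneg_of_le (fun i => sq_nonneg _) hkey
  refine ⟨hsum, ?_⟩
  calc ∑' i, c i ^ 2 ≤ ∑' i, S ^ (2 - p) * c i ^ p := hsum.tsum_le_tsum hkey (hcp.mul_left _)
    _ = S ^ 2 := by
      rw [tsum_mul_left, show ∑' i, c i ^ p = S ^ p from hTS, ← Real.rpow_two,
        Real.rpow_of_add_eq hS two_ne_zero (sub_add_cancel 2 p)]

lemma summable_mul_sq_and_tsum_mul_sq_le (hp : 2 < p) {w : ι → ℝ} (hw : ∀ i, 0 ≤ w i)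
    (hc : ∀ i, 0 ≤ c i) (hwp : Summable fun i => w i ^ (p / (p - 2)))
    (hcp : Summable fun i => c i ^ p) :
    Summable (fun i => w i * c i ^ 2) ∧
      ∑' i, w i * c i ^ 2 ≤
        (∑' i, w i ^ (p / (p - 2))) ^ (1 / (p / (p - 2))) * ((∑' i, c i ^ p) ^ (1 / p)) ^ 2 := by
  have hconj : Real.HolderConjugate (p / (p - 2)) (p / 2) := by
    rw [Real.holderConjugate_iff]
    refine ⟨(one_lt_div (by linarith)).mpr (by linarith), ?_⟩
    field_simp
    ring
  have hsq : ∀ i, (c i ^ 2) ^ (p / 2) = c i ^ p := fun i => by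
    rw [← Real.rpow_two, ← Real.rpow_mul (hc i)]
    ring_nf
  have h := Real.summable_and_inner_le_Lp_mul_Lq_tsum_of_nonneg hconj hw (fun i => sq_nonneg (c i))
    hwp (by simpa only [hsq] using hcp)
  simp only [hsq] at h
  refine ⟨h.1, h.2.trans_eq ?_⟩
  rw [← Real.rpow_two, ← Real.rpow_mul (tsum_nonneg fun i => Real.rpow_nonneg (hc i) p)]
  congr 2
  field_simp

end LpEmbedding

/-- `⟨k⟩^s |a k|`, whose `ℓ^p` norm is the `FL^{s,p}` norm of `a`. -/
noncomputable def weightedAbs (s : ℝ) (a : ℤ → ℂ) (k : ℤ) : ℝ := jb k ^ s * ‖a k‖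

section WeightedAbs

variable (s : ℝ) (a : ℤ → ℂ) (k : ℤ)

lemma weightedAbs_nonneg : 0 ≤ weightedAbs s a k :=
  mul_nonneg (Real.rpow_nonneg (jb_pos k).le s) (norm_nonneg _)

lemma norm_eq_jb_rpow_neg_mul_weightedAbs : ‖a k‖ = jb k ^ (-s) * weightedAbs s a k := by
  rw [weightedAbs, ← mul_assoc, ← Real.rpow_add (jb_pos k), neg_add_cancel, Real.rpow_zero, one_mul]

lemma weightedAbs_sub_sq (δ : ℝ) :
    weightedAbs (s - δ) a k ^ 2 = jb k ^ (-(2 * δ)) * weightedAbs s a k ^ 2 := by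
  have hjb := jb_pos k
  simp only [weightedAbs, mul_pow, ← mul_assoc]
  congr 1
  rw [← Real.rpow_mul_natCast hjb.le, ← Real.rpow_mul_natCast hjb.le, ← Real.rpow_add hjb]
  push_cast
  ring_nf

end WeightedAbs

lemma exists_tsum_weightedAbs_sq_le {p s : ℝ}
    (hcond : (1 ≤ p ∧ p ≤ 2 ∧ 0 < s) ∨ (2 < p ∧ 1 / 2 - 1 / (2 * p) < s)) :
    ∃ s₀ > 0, ∃ K > 0, ∀ a : ℤ → ℂ, Summable (fun k => weightedAbs s a k ^ p) →
      Summable (fun k => weightedAbs s₀ a k ^ 2) ∧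
        ∑' k, weightedAbs s₀ a k ^ 2 ≤ K * ((∑' k, weightedAbs s a k ^ p) ^ (1 / p)) ^ 2 := by
  rcases hcond with ⟨hp1, hp2, hs⟩ | ⟨hp, hs⟩
  · refine ⟨s, hs, 1, one_pos, fun a ha => ?_⟩
    simpa only [one_mul] using
      summable_sq_and_tsum_sq_le_of_le_two (by linarith) hp2 (weightedAbs_nonneg s a) ha
  -- lose `δ` derivatives, with `1/2 - 1/p < δ < 1/2 - 1/(2p)`, so that `⟨k⟩^(-2δ) ∈ ℓ^(p/(p-2))`
  set δ := 1 / 2 - 3 / (4 * p) with hδ_def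
  set r := p / (p - 2) with hr_def
  have hp0 : 0 < p := by linarith
  have hδr : 1 < 2 * δ * r := by
    rw [show 2 * δ * r = (2 * p - 3) / (2 * (p - 2)) by rw [hδ_def, hr_def]; field_simp; ring,
      one_lt_div (by linarith)]
    linarith
  have hw : Summable fun k : ℤ => (jb k ^ (-(2 * δ))) ^ r := by
    simpa only [← Real.rpow_mul (jb_pos _).le, neg_mul] using summable_jb_rpow_neg hδr
  have hw0 : ∀ k : ℤ, 0 ≤ jb k ^ (-(2 * δ)) := fun k => Real.rpow_nonneg (jb_pos k).le _
  have hK : 0 < ∑' k : ℤ, (jb k ^ (-(2 * δ))) ^ r :=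
    hw.tsum_pos (fun k => Real.rpow_nonneg (hw0 k) r) 0
      (Real.rpow_pos_of_pos (Real.rpow_pos_of_pos (jb_pos _) _) r)
  refine ⟨s - δ, ?_, _, Real.rpow_pos_of_pos hK (1 / r), fun a ha => ?_⟩
  · have : 3 / (4 * p) - 1 / (2 * p) = 1 / (4 * p) := by field_simp; ring
    have : 0 < 1 / (4 * p) := by positivity
    linarith
  simp only [weightedAbs_sub_sq]
  exact summable_mul_sq_and_tsum_mul_sq_le hp hw0 (weightedAbs_nonneg s a) hw ha

lemma Int.abs_le_sq (x : ℤ) : |x| ≤ x ^ 2 := by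
  simpa [sq_abs] using Int.le_self_sq |x|

section HighFrequency

variable {x y z : ℤ}

lemma abs_le_two_mul_abs_add_of_four_sq_le (h : 4 * x ^ 2 ≤ |z|) : |z| ≤ 2 * |x + z| := by
  have := abs_sub (x + z) x
  rw [add_sub_cancel_left] at this
  linarith [Int.abs_le_sq x, abs_nonneg (x + z)]

lemma two_mul_abs_add_le_of_four_sq_le (hx : 4 * x ^ 2 ≤ |z|) (hy : 4 * y ^ 2 ≤ |z|) :
    2 * |x + y| ≤ |z| := by
  linarith [abs_add_le x y, Int.abs_le_sq x, Int.abs_le_sq y]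

lemma sq_add_le_of_four_sq_le (hx : 4 * x ^ 2 ≤ |z|) (hy : 4 * y ^ 2 ≤ |z|) :
    (x + y) ^ 2 ≤ |z| := by
  nlinarith [sq_nonneg (x - y)]

lemma abs_le_two_mul_abs_add_add_of_four_sq_le (hx : 4 * x ^ 2 ≤ |z|) (hy : 4 * y ^ 2 ≤ |z|) :
    |z| ≤ 2 * |x + y + z| := by
  have := abs_sub (x + y + z) (x + y)
  rw [add_sub_cancel_left] at this
  linarith [two_mul_abs_add_le_of_four_sq_le hx hy]

lemma abs_add_add_le_of_four_sq_le (hx : 4 * x ^ 2 ≤ |z|) (hy : 4 * y ^ 2 ≤ |z|) :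
    2 * |x + y + z| ≤ 3 * |z| := by
  linarith [abs_add_le (x + y) z, two_mul_abs_add_le_of_four_sq_le hx hy]

end HighFrequency

lemma norm_kernel_le {n₁ n₂ n₃ : ℤ} (h₁ : 4 * n₁ ^ 2 ≤ |n₃|) (h₂ : 4 * n₂ ^ 2 ≤ |n₃|)
    (hne : (n₁ + n₂) * (n₁ + n₃) * (n₂ + n₃) ≠ 0) :
    ‖(((n₁ + n₂ + n₃) * n₃ : ℤ) : ℂ) / ((3 * (n₁ + n₂) * (n₁ + n₃) * (n₂ + n₃) : ℤ) : ℂ)‖ ≤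
      2 / |((n₁ + n₂ : ℤ) : ℝ)| := by
  have hm : n₁ + n₂ ≠ 0 := left_ne_zero_of_mul (left_ne_zero_of_mul hne)
  have hD : 0 < |3 * (n₁ + n₂) * (n₁ + n₃) * (n₂ + n₃)| := abs_pos.mpr (by
    simp only [mul_assoc] at hne ⊢; exact mul_ne_zero three_ne_zero hne)
  have hn : |n₁ + n₂ + n₃| ≤ 3 * |n₂ + n₃| := by
    linarith [abs_add_add_le_of_four_sq_le h₁ h₂, abs_le_two_mul_abs_add_of_four_sq_le h₂]
  have h₃ : |n₃| ≤ 2 * |n₁ + n₃| := abs_le_two_mul_abs_add_of_four_sq_le h₁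
  have hnum : |(n₁ + n₂ + n₃) * n₃| ≤ 6 * |(n₁ + n₃) * (n₂ + n₃)| := by
    rw [abs_mul, abs_mul]
    nlinarith [abs_nonneg (n₁ + n₂ + n₃), abs_nonneg (n₂ + n₃)]
  have key : |(n₁ + n₂ + n₃) * n₃| * |n₁ + n₂| ≤ 2 * |3 * (n₁ + n₂) * (n₁ + n₃) * (n₂ + n₃)| := by
    have hD' : |3 * (n₁ + n₂) * (n₁ + n₃) * (n₂ + n₃)| =
        3 * |(n₁ + n₃) * (n₂ + n₃)| * |n₁ + n₂| := by
      rw [show 3 * (n₁ + n₂) * (n₁ + n₃) * (n₂ + n₃) = 3 * ((n₁ + n₃) * (n₂ + n₃)) * (n₁ + n₂) by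
        ring, abs_mul, abs_mul, abs_of_pos three_pos]
    rw [hD']
    nlinarith [abs_nonneg (n₁ + n₂)]
  rw [norm_div, Complex.norm_intCast, Complex.norm_intCast,
    div_le_div_iff₀ (by exact_mod_cast hD) (by positivity)]
  exact_mod_cast key

lemma jb_rpow_neg_prod_le {s : ℝ} (hs : 0 ≤ s) {N : ℕ} (hN : 0 < N) {n₁ n₂ n₃ : ℤ}
    (hn : (N : ℤ) < |n₁ + n₂ + n₃|) (h₁ : 4 * n₁ ^ 2 ≤ |n₃|) (h₂ : 4 * n₂ ^ 2 ≤ |n₃|)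
    (hm : n₁ + n₂ ≠ 0) :
    jb n₁ ^ (-s) * jb ((-n₂ : ℤ) : ℝ) ^ (-s) * jb n₃ ^ (-s) * jb ((n₁ + n₂ + n₃ : ℤ) : ℝ) ^ (-s) ≤
      4 ^ s * (N : ℝ) ^ (-s) * |((n₁ + n₂ : ℤ) : ℝ)| ^ (-(2 * s)) := by
  have hneg : -s ≤ 0 := by linarith
  have hJ (k : ℤ) : 0 ≤ jb k ^ (-s) := Real.rpow_nonneg (jb_pos k).le _
  have hJ₁ := Real.rpow_le_one_of_one_le_of_nonpos (one_le_jb n₁) hneg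
  have hJ₂ := Real.rpow_le_one_of_one_le_of_nonpos (one_le_jb ((-n₂ : ℤ) : ℝ)) hneg
  have hJn : jb ((n₁ + n₂ + n₃ : ℤ) : ℝ) ^ (-s) ≤ 2 ^ s * jb n₃ ^ (-s) :=
    jb_rpow_neg_le_of_abs_le hs (by exact_mod_cast abs_le_two_mul_abs_add_add_of_four_sq_le h₁ h₂)
  have hJN : jb n₃ ^ (-s) ≤ 2 ^ s * (N : ℝ) ^ (-s) := by
    refine rpow_neg_le_of_le_two_mul (by exact_mod_cast hN) hs ?_
    have : (N : ℝ) ≤ 2 * |(n₃ : ℝ)| := by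
      rw [← Int.cast_abs]
      exact_mod_cast (by linarith [abs_add_add_le_of_four_sq_le h₁ h₂] : (N : ℤ) ≤ 2 * |n₃|)
    linarith [abs_le_jb (n₃ : ℝ)]
  have hJm : jb n₃ ^ (-s) ≤ |((n₁ + n₂ : ℤ) : ℝ)| ^ (-(2 * s)) := by
    have hm' : 0 < |((n₁ + n₂ : ℤ) : ℝ)| := abs_pos.mpr (by exact_mod_cast hm)
    have hsq : |((n₁ + n₂ : ℤ) : ℝ)| ^ 2 ≤ jb n₃ := by
      have : (((n₁ + n₂) ^ 2 : ℤ) : ℝ) ≤ |(n₃ : ℝ)| := by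
        exact_mod_cast sq_add_le_of_four_sq_le h₁ h₂
      rw [sq_abs, ← Int.cast_pow]
      exact this.trans (abs_le_jb _)
    calc jb n₃ ^ (-s) ≤ (|((n₁ + n₂ : ℤ) : ℝ)| ^ 2) ^ (-s) :=
          Real.rpow_le_rpow_of_nonpos (by positivity) hsq hneg
      _ = _ := by rw [← Real.rpow_natCast, ← Real.rpow_mul hm'.le]; ring_nf
  have hJ₃ := hJ n₃
  calc jb n₁ ^ (-s) * jb ((-n₂ : ℤ) : ℝ) ^ (-s) * jb n₃ ^ (-s) * jb ((n₁ + n₂ + n₃ : ℤ) : ℝ) ^ (-s)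
      ≤ 1 * 1 * jb n₃ ^ (-s) * (2 ^ s * jb n₃ ^ (-s)) := by
        gcongr <;> exact hJ _
    _ ≤ 1 * 1 * (2 ^ s * (N : ℝ) ^ (-s)) * (2 ^ s * |((n₁ + n₂ : ℤ) : ℝ)| ^ (-(2 * s))) := by
        gcongr
    _ = 4 ^ s * (N : ℝ) ^ (-s) * |((n₁ + n₂ : ℤ) : ℝ)| ^ (-(2 * s)) := by
        rw [show (4 : ℝ) = 2 * 2 by norm_num, Real.mul_rpow zero_le_two zero_le_two]
        ring

/-- `q = (n, n₁, n₂, n₃)`. -/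
def BoundaryRegion (N : ℕ) (q : ℤ × ℤ × ℤ × ℤ) : Prop :=
  (N : ℤ) < |q.1| ∧ q.1 = q.2.1 + q.2.2.1 + q.2.2.2 ∧
    (q.2.1 + q.2.2.1) * (q.2.1 + q.2.2.2) * (q.2.2.1 + q.2.2.2) ≠ 0 ∧
    4 * q.2.1 ^ 2 ≤ |q.2.2.2| ∧ 4 * q.2.2.1 ^ 2 ≤ |q.2.2.2|

noncomputable def boundaryTerm (a : ℤ → ℂ) (q : ℤ × ℤ × ℤ × ℤ) : ℂ :=
  (((q.1 * q.2.2.2 : ℤ) : ℂ) /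
      ((3 * (q.2.1 + q.2.2.1) * (q.2.1 + q.2.2.2) * (q.2.2.1 + q.2.2.2) : ℤ) : ℂ)) *
    a q.2.1 * starRingEnd ℂ (a (-q.2.2.1)) * a q.2.2.2 * starRingEnd ℂ (a q.1)

lemma norm_boundaryTerm_le {s : ℝ} (hs : 0 ≤ s) {N : ℕ} (hN : 0 < N) (a : ℤ → ℂ)
    {n n₁ n₂ n₃ : ℤ} (hq : BoundaryRegion N (n, n₁, n₂, n₃)) :
    ‖boundaryTerm a (n, n₁, n₂, n₃)‖ ≤ 2 * 4 ^ s * (N : ℝ) ^ (-s) *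
      (|((n₁ + n₂ : ℤ) : ℝ)| ^ (-(1 + 2 * s)) *
        (weightedAbs s a n₁ * weightedAbs s a (-n₂) * weightedAbs s a n₃ * weightedAbs s a n)) := by
  obtain ⟨hn, hsum, hne, h₁, h₂⟩ := hq
  dsimp only at hn hsum hne h₁ h₂
  subst hsum
  have hm : 0 < |((n₁ + n₂ : ℤ) : ℝ)| :=
    abs_pos.mpr (Int.cast_ne_zero.mpr (left_ne_zero_of_mul (left_ne_zero_of_mul hne)))
  have hK := norm_kernel_le h₁ h₂ hne
  have hJ := jb_rpow_neg_prod_le hs hN hn h₁ h₂ (left_ne_zero_of_mul (left_ne_zero_of_mul hne))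
  have hJ₀ (k : ℤ) : 0 ≤ jb k ^ (-s) := Real.rpow_nonneg (jb_pos k).le _
  have hb (k : ℤ) := weightedAbs_nonneg s a k
  simp only [boundaryTerm, norm_mul, Complex.norm_conj, norm_eq_jb_rpow_neg_mul_weightedAbs s a]
  calc _ = ‖(((n₁ + n₂ + n₃) * n₃ : ℤ) : ℂ) / ((3 * (n₁ + n₂) * (n₁ + n₃) * (n₂ + n₃) : ℤ) : ℂ)‖ *
          (jb n₁ ^ (-s) * jb ((-n₂ : ℤ) : ℝ) ^ (-s) * jb n₃ ^ (-s) *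
            jb ((n₁ + n₂ + n₃ : ℤ) : ℝ) ^ (-s)) *
          (weightedAbs s a n₁ * weightedAbs s a (-n₂) * weightedAbs s a n₃ *
            weightedAbs s a (n₁ + n₂ + n₃)) := by ring
    _ ≤ 2 / |((n₁ + n₂ : ℤ) : ℝ)| * (4 ^ s * (N : ℝ) ^ (-s) * |((n₁ + n₂ : ℤ) : ℝ)| ^ (-(2 * s))) *
          (weightedAbs s a n₁ * weightedAbs s a (-n₂) * weightedAbs s a n₃ *
            weightedAbs s a (n₁ + n₂ + n₃)) :=
        mul_le_mul_of_nonneg_right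
          (mul_le_mul hK hJ (mul_nonneg (mul_nonneg (mul_nonneg (hJ₀ _) (hJ₀ _)) (hJ₀ _)) (hJ₀ _))
            (by positivity))
          (mul_nonneg (mul_nonneg (mul_nonneg (hb _) (hb _)) (hb _)) (hb _))
    _ = _ := by
        rw [neg_add, Real.rpow_add hm, Real.rpow_neg_one]
        ring

lemma sum_mul_comp_le_tsum_sq {ι κ : Type*} {b : κ → ℝ} (hb : Summable fun k => b k ^ 2)
    (s : Finset ι) {f g : ι → κ} (hf : f.Injective) (hg : g.Injective) :
    ∑ i ∈ s, b (f i) * b (g i) ≤ ∑' k, b k ^ 2 := by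
  have hsq {e : ι → κ} (he : e.Injective) : ∑ i ∈ s, b (e i) ^ 2 ≤ ∑' k, b k ^ 2 := by
    have := hb.sum_le_tsum (s.map ⟨e, he⟩) fun k _ => sq_nonneg _
    rwa [sum_map, Function.Embedding.coeFn_mk] at this
  calc ∑ i ∈ s, b (f i) * b (g i) ≤ ∑ i ∈ s, (b (f i) ^ 2 + b (g i) ^ 2) / 2 :=
        sum_le_sum fun i _ => by linarith [two_mul_le_add_sq (b (f i)) (b (g i))]
    _ ≤ ∑' k, b k ^ 2 := by
        rw [← sum_div, sum_add_distrib]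
        linarith [hsq hf, hsq hg]

lemma sum_shift_products_le {w b : ℤ → ℝ} (hw : ∀ m, 0 ≤ w m) (hw' : Summable w)
    (hb : ∀ k, 0 ≤ b k) (hb' : Summable fun k => b k ^ 2) (T : Finset (ℤ × ℤ × ℤ)) :
    ∑ t ∈ T, w t.1 * (b t.2.1 * b (t.2.1 - t.1) * (b t.2.2 * b (t.2.2 + t.1))) ≤
      (∑' m, w m) * (∑' k, b k ^ 2) ^ 2 := by
  set B := ∑' k, b k ^ 2
  set M := T.image Prod.fst
  set U := T.image fun t => t.2.1
  set V := T.image fun t => t.2.2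
  have hT : T ⊆ M ×ˢ U ×ˢ V := fun t ht => by
    simp only [mem_product]
    exact ⟨mem_image_of_mem _ ht, mem_image_of_mem _ ht, mem_image_of_mem _ ht⟩
  have hU (m : ℤ) : ∑ u ∈ U, b u * b (u - m) ≤ B :=
    sum_mul_comp_le_tsum_sq hb' U (f := id) Function.injective_id sub_left_injective
  have hV (m : ℤ) : ∑ v ∈ V, b v * b (v + m) ≤ B :=
    sum_mul_comp_le_tsum_sq hb' V (f := id) Function.injective_id (add_left_injective m)
  calc _ ≤ ∑ t ∈ M ×ˢ U ×ˢ V, w t.1 * (b t.2.1 * b (t.2.1 - t.1) * (b t.2.2 * b (t.2.2 + t.1))) :=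
        sum_le_sum_of_subset_of_nonneg hT fun t _ _ =>
          mul_nonneg (hw _) (mul_nonneg (mul_nonneg (hb _) (hb _)) (mul_nonneg (hb _) (hb _)))
    _ = ∑ m ∈ M, w m * ((∑ u ∈ U, b u * b (u - m)) * ∑ v ∈ V, b v * b (v + m)) := by
        simp_rw [sum_product, sum_mul_sum, mul_sum]
    _ ≤ ∑ m ∈ M, w m * (B * B) := by
        gcongr with m
        · exact hw m
        · exact sum_nonneg fun u _ => mul_nonneg (hb _) (hb _)
        · exact hU m
        · exact hV m
    _ = (∑ m ∈ M, w m) * B ^ 2 := by rw [sum_mul, sq]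
    _ ≤ (∑' m, w m) * B ^ 2 := by
        gcongr
        exact hw'.sum_le_tsum M fun m _ => hw m

/-- `(n, n₁, n₂, n₃) ↦ (n₁ + n₂, n₁, n₃)`, injective since `n = n₁ + n₂ + n₃`. -/
def boundaryTriple (N : ℕ) : {q // BoundaryRegion N q} ↪ ℤ × ℤ × ℤ where
  toFun x := (x.1.2.1 + x.1.2.2.1, x.1.2.1, x.1.2.2.2)
  inj' := by
    rintro ⟨⟨n, n₁, n₂, n₃⟩, hq⟩ ⟨⟨n', n₁', n₂', n₃'⟩, hq'⟩ h
    simp only [Prod.mk.injEq] at h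
    obtain ⟨hm, rfl, rfl⟩ := h
    have hn : n = n₁ + n₂ + n₃ := hq.2.1
    have hn' : n' = n₁ + n₂' + n₃ := hq'.2.1
    obtain rfl : n₂ = n₂' := by simpa using hm
    subst hn hn'
    rfl

lemma boundaryTriple_apply {N : ℕ} (x : {q // BoundaryRegion N q}) :
    boundaryTriple N x = (x.1.2.1 + x.1.2.2.1, x.1.2.1, x.1.2.2.2) :=
  rfl

lemma sum_norm_boundaryTerm_le {s : ℝ} (hs : 0 < s) {N : ℕ} (hN : 0 < N) (a : ℤ → ℂ)
    (ha : Summable fun k => weightedAbs s a k ^ 2) (F : Finset {q // BoundaryRegion N q}) :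
    ∑ x ∈ F, ‖boundaryTerm a x‖ ≤
      2 * 4 ^ s * (∑' m : ℤ, |(m : ℝ)| ^ (-(1 + 2 * s))) * (N : ℝ) ^ (-s) *
        (∑' k, weightedAbs s a k ^ 2) ^ 2 := by
  set w : ℤ → ℝ := fun m => |(m : ℝ)| ^ (-(1 + 2 * s))
  set b := weightedAbs s a
  set f : ℤ × ℤ × ℤ → ℝ := fun t =>
    w t.1 * (b t.2.1 * b (t.2.1 - t.1) * (b t.2.2 * b (t.2.2 + t.1)))
  have hpoint : ∀ x : {q // BoundaryRegion N q},
      ‖boundaryTerm a x‖ ≤ 2 * 4 ^ s * (N : ℝ) ^ (-s) * f (boundaryTriple N x) := by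
    rintro ⟨⟨n, n₁, n₂, n₃⟩, hq⟩
    have hn : n₃ + (n₁ + n₂) = n := by linarith [show n = n₁ + n₂ + n₃ from hq.2.1]
    refine (norm_boundaryTerm_le hs.le hN a hq).trans_eq ?_
    simp only [f, w, b, boundaryTriple_apply, sub_add_cancel_left, hn]
    ring
  calc ∑ x ∈ F, ‖boundaryTerm a x‖ ≤ ∑ x ∈ F, 2 * 4 ^ s * (N : ℝ) ^ (-s) * f (boundaryTriple N x) :=
        sum_le_sum fun x _ => hpoint x
    _ = 2 * 4 ^ s * (N : ℝ) ^ (-s) * ∑ t ∈ F.map (boundaryTriple N), f t := by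
        rw [sum_map, mul_sum]
    _ ≤ 2 * 4 ^ s * (N : ℝ) ^ (-s) * ((∑' m, w m) * (∑' k, b k ^ 2) ^ 2) := by
        gcongr
        exact sum_shift_products_le (fun m => Real.rpow_nonneg (abs_nonneg _) _)
          (Real.summable_abs_int_rpow (by linarith)) (weightedAbs_nonneg s a) ha _
    _ = _ := by ring

theorem stmt15 (p s : ℝ)
    (hcond : (1 ≤ p ∧ p ≤ 2 ∧ 0 < s) ∨ (2 < p ∧ 1 / 2 - 1 / (2 * p) < s)) :
    ∃ C : ℝ, 0 < C ∧ ∃ ε : ℝ, 0 < ε ∧ ∀ N : ℕ, 0 < N → ∀ a : ℤ → ℂ,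
      Summable (fun n : ℤ => (jb (n : ℝ) ^ s * ‖a n‖) ^ p) →
      ‖∑' x : {q : ℤ × ℤ × ℤ × ℤ //
          (N : ℤ) < |q.1| ∧ q.1 = q.2.1 + q.2.2.1 + q.2.2.2 ∧
          (q.2.1 + q.2.2.1) * (q.2.1 + q.2.2.2) * (q.2.2.1 + q.2.2.2) ≠ 0 ∧
          4 * q.2.1 ^ 2 ≤ |q.2.2.2| ∧ 4 * q.2.2.1 ^ 2 ≤ |q.2.2.2|},
        (((x.1.1 * x.1.2.2.2 : ℤ) : ℂ) /
            ((3 * (x.1.2.1 + x.1.2.2.1) * (x.1.2.1 + x.1.2.2.2) *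
              (x.1.2.2.1 + x.1.2.2.2) : ℤ) : ℂ)) *
          a x.1.2.1 * starRingEnd ℂ (a (-x.1.2.2.1)) * a x.1.2.2.2 *
          starRingEnd ℂ (a x.1.1)‖ ≤
        C * (N : ℝ) ^ (-ε) *
          ((∑' n : ℤ, (jb (n : ℝ) ^ s * ‖a n‖) ^ p) ^ (1 / p)) ^ 4 := by
  obtain ⟨s₀, hs₀, K, hK, hembed⟩ := exists_tsum_weightedAbs_sq_le hcond
  have hW : 0 < ∑' m : ℤ, |(m : ℝ)| ^ (-(1 + 2 * s₀)) :=
    (Real.summable_abs_int_rpow (by linarith)).tsum_pos (fun m => by positivity) 1 (by norm_num)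
  refine ⟨2 * 4 ^ s₀ * (∑' m : ℤ, |(m : ℝ)| ^ (-(1 + 2 * s₀))) * K ^ 2, by positivity, s₀, hs₀,
    fun N hN a ha => ?_⟩
  obtain ⟨hb, hbK⟩ := hembed a ha
  have hF := sum_norm_boundaryTerm_le hs₀ hN a hb
  calc ‖∑' x : {q // BoundaryRegion N q}, boundaryTerm a x‖
      ≤ ∑' x : {q // BoundaryRegion N q}, ‖boundaryTerm a x‖ :=
        norm_tsum_le_tsum_norm (summable_of_sum_le (fun _ => norm_nonneg _) hF)
    _ ≤ _ := tsum_le_of_sum_le' (by positivity) hF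
    _ ≤ 2 * 4 ^ s₀ * (∑' m : ℤ, |(m : ℝ)| ^ (-(1 + 2 * s₀))) * (N : ℝ) ^ (-s₀) *
          (K * ((∑' n : ℤ, weightedAbs s a n ^ p) ^ (1 / p)) ^ 2) ^ 2 := by
        gcongr
    _ = _ := by unfold weightedAbs; ring
end
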